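/- Suppose f is worst-case monotone and worst-case submodular, f(∅) = 0, and f(φ) = Q for every φ ∈ U, where Q > 0. Let η be a real number with 0 < η ≤ Q such that for every partial realization ψ consistent with some realization in U, f(ψ) > Q − η implies f(ψ) = Q. Let π^g be a worst-case density-greedy policy. Then for every adaptive policy π* that covers Q (i.e., f(ψ(π*,φ)) ≥ Q for every φ ∈ U), c_wc(π^g) ≤ (ln(Q/η) + 1) · c_wc(π*). -/

import Mathlib

namespace WCAS

variable {ι O : Type*}

/-- The domain of a partial realization `ψ : ι → Option O`. -/
def dom (ψ : ι → Option O) : Set ι := {e | ψ e ≠ none}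

/-- A (full) realization `φ` is consistent with a partial realization `ψ`. -/
def consistent (φ : ι → O) (ψ : ι → Option O) : Prop :=
  ∀ e o, ψ e = some o → φ e = o

/-- `ψ` is a subrealization of `ψ'` (written `ψ ⊆ ψ'`). -/
def subreal (ψ ψ' : ι → Option O) : Prop :=
  ∀ e o, ψ e = some o → ψ' e = some o

/-- Extend a partial realization `ψ` by observing state `o` for item `e`. -/
def extendPR [DecidableEq ι] (ψ : ι → Option O) (e : ι) (o : O) : ι → Option O :=
  fun x => if x = e then some o else ψ x

/-- The empty partial realization. -/
def emptyPR : ι → Option O := fun _ => none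

/-- View a full realization as a partial realization with full domain. -/
def toPR (φ : ι → O) : ι → Option O := fun e => some (φ e)

/-- `O(e, ψ)`: the set of possible states of item `e` given observation `ψ`,
with respect to the set `U` of possible realizations. -/
def Ostates (U : Set (ι → O)) (e : ι) (ψ : ι → Option O) : Set O :=
  {o | ∃ φ ∈ U, consistent φ ψ ∧ φ e = o}

/-- The worst-case marginal utility `Δwc(e | ψ)` of item `e` on top of `ψ`. -/
noncomputable def Dwc [DecidableEq ι] (f : (ι → Option O) → ℝ) (U : Set (ι → O))
    (e : ι) (ψ : ι → Option O) : ℝ :=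
  sInf ((fun o => f (extendPR ψ e o) - f ψ) '' Ostates U e ψ)

/-- `f` is worst-case monotone. -/
def WCMonotone [DecidableEq ι] (f : (ι → Option O) → ℝ) (U : Set (ι → O)) : Prop :=
  ∀ ψ : ι → Option O, (∃ φ ∈ U, consistent φ ψ) →
    ∀ e, e ∉ dom ψ → 0 ≤ Dwc f U e ψ

/-- `f` is worst-case submodular. -/
def WCSubmodular [DecidableEq ι] (f : (ι → Option O) → ℝ) (U : Set (ι → O)) : Prop :=
  ∀ ψ ψ' : ι → Option O, subreal ψ ψ' → (∃ φ ∈ U, consistent φ ψ') →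
    ∀ e, e ∉ dom ψ' → Dwc f U e ψ' ≤ Dwc f U e ψ

/-- An adaptive policy maps each observation either to an item outside its
domain or to `none` (stop). -/
def ValidPolicy (π : (ι → Option O) → Option ι) : Prop :=
  ∀ ψ e, π ψ = some e → ψ e = none

/-- One step of executing policy `π` under realization `φ`. -/
def stepPolicy [DecidableEq ι] (π : (ι → Option O) → Option ι) (φ : ι → O)
    (ψ : ι → Option O) : ι → Option O :=
  match π ψ with
  | none => ψ
  | some e => extendPR ψ e (φ e)

/-- Executing policy `π` under realization `φ` for `n` steps, starting from the
empty observation. -/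
def runPolicy [DecidableEq ι] (π : (ι → Option O) → Option ι) (φ : ι → O) :
    ℕ → ι → Option O
  | 0 => emptyPR
  | n + 1 => stepPolicy π φ (runPolicy π φ n)

/-- The final partial realization `ψ(π, φ)` produced by executing `π` under `φ`
(a valid policy over a finite ground set terminates within `card ι` steps). -/
def finalPR [DecidableEq ι] [Fintype ι] (π : (ι → Option O) → Option ι) (φ : ι → O) :
    ι → Option O :=
  runPolicy π φ (Fintype.card ι)

open scoped Classical in
/-- The total cost `c(dom ψ)` of the items in the domain of `ψ`. -/
noncomputable def costPR [Fintype ι] (c : ι → ℝ) (ψ : ι → Option O) : ℝ :=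
  ∑ e : ι, if (ψ e).isSome then c e else 0

/-- The worst-case cost `c_wc(π) = max_{φ ∈ U} c(dom ψ(π, φ))`. -/
noncomputable def cwc [DecidableEq ι] [Fintype ι] (c : ι → ℝ) (U : Set (ι → O))
    (π : (ι → Option O) → Option ι) : ℝ :=
  sSup ((fun φ => costPR c (finalPR π φ)) '' U)

/-- The worst-case utility `f_wc(π) = min_{φ ∈ U} f(ψ(π, φ))`. -/
noncomputable def fwc [DecidableEq ι] [Fintype ι] (f : (ι → Option O) → ℝ)
    (U : Set (ι → O)) (π : (ι → Option O) → Option ι) : ℝ :=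
  sInf ((fun φ => f (finalPR π φ)) '' U)

/-- `ψ` is reachable by executing `π` under some realization in `U`. -/
def Reachable [DecidableEq ι] (π : (ι → Option O) → Option ι) (U : Set (ι → O))
    (ψ : ι → Option O) : Prop :=
  ∃ φ ∈ U, ∃ n, runPolicy π φ n = ψ

/-- Policy `π` covers the goal value `Q`: under every realization in `U`,
its final observation has utility at least `Q`. -/
def Covers [DecidableEq ι] [Fintype ι] (f : (ι → Option O) → ℝ) (U : Set (ι → O))
    (π : (ι → Option O) → Option ι) (Q : ℝ) : Prop :=
  ∀ φ ∈ U, Q ≤ f (finalPR π φ)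

/-- The worst-case density-greedy policy for the cover problem with goal `Q`:
it stops at observations with `f ψ ≥ Q`, and at any reachable observation with
`f ψ < Q` it selects an item maximizing `Δwc(e | ψ) / c(e)`. -/
def CoverGreedy [DecidableEq ι] [Fintype ι] (f : (ι → Option O) → ℝ)
    (U : Set (ι → O)) (c : ι → ℝ) (Q : ℝ) (π : (ι → Option O) → Option ι) : Prop :=
  ValidPolicy π ∧
  (∀ ψ : ι → Option O, Q ≤ f ψ → π ψ = none) ∧
  (∀ ψ : ι → Option O, Reachable π U ψ → f ψ < Q →
    ∃ e, e ∉ dom ψ ∧ π ψ = some e ∧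
      ∀ e', e' ∉ dom ψ → Dwc f U e' ψ / c e' ≤ Dwc f U e ψ / c e)

/-- The budgeted worst-case density-greedy policy: at any reachable observation
it picks a density-maximizing item and selects it if the budget permits,
stopping otherwise. -/
def BudgetGreedy [DecidableEq ι] [Fintype ι] (f : (ι → Option O) → ℝ)
    (U : Set (ι → O)) (c : ι → ℝ) (B : ℝ) (π : (ι → Option O) → Option ι) : Prop :=
  ValidPolicy π ∧
  ∀ ψ : ι → Option O, Reachable π U ψ → dom ψ ≠ Set.univ →
    ∃ e, e ∉ dom ψ ∧
      (∀ e', e' ∉ dom ψ → Dwc f U e' ψ / c e' ≤ Dwc f U e ψ / c e) ∧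
      ((costPR c ψ + c e ≤ B ∧ π ψ = some e) ∨ (B < costPR c ψ + c e ∧ π ψ = none))

/-- The relaxed budgeted worst-case density-greedy policy: it keeps selecting
density-maximizing items while the cost spent so far is within the budget
(thus also selecting the first item that makes the total cost exceed the
budget), and stops once the budget has been exceeded. -/
def RelaxedBudgetGreedy [DecidableEq ι] [Fintype ι] (f : (ι → Option O) → ℝ)
    (U : Set (ι → O)) (c : ι → ℝ) (B : ℝ) (π : (ι → Option O) → Option ι) : Prop :=
  ValidPolicy π ∧
  (∀ ψ : ι → Option O, Reachable π U ψ → B < costPR c ψ → π ψ = none) ∧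
  (∀ ψ : ι → Option O, Reachable π U ψ → costPR c ψ ≤ B → dom ψ ≠ Set.univ →
    ∃ e, e ∉ dom ψ ∧ π ψ = some e ∧
      ∀ e', e' ∉ dom ψ → Dwc f U e' ψ / c e' ≤ Dwc f U e ψ / c e)

/-! The greedy policy's worst-case cost is bounded by a potential argument. Let `B = c_wc(π*)`.
If the best worst-case density at an observation `ψ` is `ρ`, then `Q - f ψ ≤ ρ B`: an adversary
answers each query of `π*` with a worst-case state, so by worst-case submodularity the utility it
concedes is at most `ρ` per unit of cost, while `π*` must still reach `Q`. Hence a greedy step of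
cost `c e` gains at least `c e (Q - f ψ) / B`, so while `f < Q` the spent cost is at most
`B (log Q - log (Q - f))`, and the gap `η` caps this at `B log (Q / η)`; the final step, which
reaches `Q`, costs at most `B`. -/

section PartialRealizations

theorem notMem_dom {ψ : ι → Option O} {e : ι} : e ∉ dom ψ ↔ ψ e = none := by
  simp [dom]

theorem subreal_refl (ψ : ι → Option O) : subreal ψ ψ := fun _ _ h => h

theorem subreal_trans {a b c : ι → Option O} (hab : subreal a b) (hbc : subreal b c) :
    subreal a c := fun e o h => hbc e o (hab e o h)

theorem consistent.mono {φ : ι → O} {a b : ι → Option O} (h : consistent φ b)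
    (hab : subreal a b) : consistent φ a := fun e o he => h e o (hab e o he)

theorem subreal.eq_of_eq_none {a b : ι → Option O} (hab : subreal a b)
    (h : ∀ x, a x = none → b x = none) : a = b := by
  funext x
  cases hax : a x with
  | none => exact (h x hax).symm
  | some o => exact (hab x o hax).symm

theorem consistent_emptyPR (φ : ι → O) : consistent φ (emptyPR : ι → Option O) :=
  fun _ _ h => nomatch h

theorem consistent_toPR (φ : ι → O) : consistent φ (toPR φ) :=
  fun _ _ h => Option.some.inj h

theorem subreal_toPR {φ : ι → O} {ψ : ι → Option O} (h : consistent φ ψ) :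
    subreal ψ (toPR φ) := by
  intro x o hx
  rw [toPR, h x o hx]

theorem mem_Ostates {U : Set (ι → O)} {φ : ι → O} {ψ : ι → Option O} (hφ : φ ∈ U)
    (h : consistent φ ψ) (e : ι) : φ e ∈ Ostates U e ψ :=
  ⟨φ, hφ, h, rfl⟩

variable [DecidableEq ι]

theorem extendPR_self (ψ : ι → Option O) (e : ι) (o : O) : extendPR ψ e o e = some o := by
  simp [extendPR]

theorem extendPR_of_ne (ψ : ι → Option O) {x e : ι} (h : x ≠ e) (o : O) :
    extendPR ψ e o x = ψ x := by
  simp [extendPR, h]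

theorem subreal_extendPR {ψ : ι → Option O} {e : ι} (h : ψ e = none) (o : O) :
    subreal ψ (extendPR ψ e o) := by
  intro x o' hx
  rcases eq_or_ne x e with rfl | hne
  · simp [h] at hx
  · rwa [extendPR_of_ne ψ hne]

theorem extendPR_subreal {ψ κ : ι → Option O} (h : subreal ψ κ) {e : ι} {o : O}
    (he : κ e = some o) : subreal (extendPR ψ e o) κ := by
  intro x o' hx
  rcases eq_or_ne x e with rfl | hne
  · rw [extendPR_self] at hx
    rwa [← hx]
  · rw [extendPR_of_ne ψ hne] at hx
    exact h x o' hx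

theorem consistent_extendPR {φ : ι → O} {ψ : ι → Option O} (h : consistent φ ψ) (e : ι) :
    consistent φ (extendPR ψ e (φ e)) := by
  intro x o hx
  rcases eq_or_ne x e with rfl | hne
  · rw [extendPR_self] at hx
    exact Option.some.inj hx
  · rw [extendPR_of_ne ψ hne] at hx
    exact h x o hx

theorem consistent_extendPR_of_mem_Ostates {U : Set (ι → O)} {e : ι} {ψ : ι → Option O} {o : O}
    (h : o ∈ Ostates U e ψ) : ∃ φ ∈ U, consistent φ (extendPR ψ e o) := by
  obtain ⟨φ, hφ, hψ, rfl⟩ := h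
  exact ⟨φ, hφ, consistent_extendPR hψ e⟩

end PartialRealizations

section WorstCaseMarginal

variable [DecidableEq ι] [Finite O] {f : (ι → Option O) → ℝ} {U : Set (ι → O)}

theorem Dwc_le {e : ι} {ψ : ι → Option O} {o : O} (h : o ∈ Ostates U e ψ) :
    Dwc f U e ψ ≤ f (extendPR ψ e o) - f ψ :=
  csInf_le ((Set.toFinite _).image _).bddBelow ⟨o, h, rfl⟩

theorem exists_Dwc_eq {e : ι} {ψ : ι → Option O} (h : ∃ φ ∈ U, consistent φ ψ) :
    ∃ o ∈ Ostates U e ψ, f (extendPR ψ e o) - f ψ = Dwc f U e ψ := by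
  obtain ⟨φ, hφ, hψ⟩ := h
  exact ((Set.Nonempty.image _ ⟨φ e, mem_Ostates hφ hψ e⟩).csInf_mem
    ((Set.toFinite _).image _))

theorem WCMonotone.le_of_subreal [Fintype ι] (hmono : WCMonotone f U) {φ : ι → O}
    (hφ : φ ∈ U) {a b : ι → Option O} (hab : subreal a b) (hb : consistent φ b) :
    f a ≤ f b := by
  suffices ∀ s : Finset ι, ∀ a, subreal a b → (∀ x, a x = none → b x ≠ none → x ∈ s) →
      f a ≤ f b from this Finset.univ a hab fun x _ _ => Finset.mem_univ x
  intro s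
  induction s using Finset.induction_on with
  | empty =>
    intro a hab hmiss
    rw [hab.eq_of_eq_none fun x hax => by_contra fun hbx => by simpa using hmiss x hax hbx]
  | insert e s _ ih =>
    intro a hab hmiss
    by_cases he : a e = none ∧ b e ≠ none
    · obtain ⟨hae, hbe⟩ := he
      obtain ⟨o, hbo⟩ := Option.ne_none_iff_exists'.mp hbe
      have ha : consistent φ a := hb.mono hab
      have hstep : f a ≤ f (extendPR a e (φ e)) := by
        have := Dwc_le (f := f) (mem_Ostates hφ ha e)
        linarith [hmono a ⟨φ, hφ, ha⟩ e (notMem_dom.mpr hae)]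
      rw [hb e o hbo] at hstep
      refine hstep.trans (ih _ (extendPR_subreal hab hbo) fun x hx hbx => ?_)
      have hxe : x ≠ e := by rintro rfl; simp [extendPR_self] at hx
      rw [extendPR_of_ne a hxe] at hx
      exact (Finset.mem_insert.mp (hmiss x hx hbx)).resolve_left hxe
    · exact ih a hab fun x hx hbx =>
        (Finset.mem_insert.mp (hmiss x hx hbx)).resolve_left (by rintro rfl; exact he ⟨hx, hbx⟩)

end WorstCaseMarginal

section Cost

variable [Fintype ι]

theorem costPR_nonneg {c : ι → ℝ} (hc : ∀ e, 0 ≤ c e) (ψ : ι → Option O) :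
    0 ≤ costPR c ψ :=
  Finset.sum_nonneg fun e _ => by split_ifs <;> simp [hc e]

theorem costPR_emptyPR (c : ι → ℝ) : costPR c (emptyPR : ι → Option O) = 0 := by
  simp [costPR, emptyPR]

theorem costPR_extendPR [DecidableEq ι] (c : ι → ℝ) {ψ : ι → Option O} {e : ι}
    (h : ψ e = none) (o : O) : costPR c (extendPR ψ e o) = costPR c ψ + c e := by
  unfold costPR
  rw [← Finset.sum_erase_add _ _ (Finset.mem_univ e),
    ← Finset.sum_erase_add _ _ (Finset.mem_univ e),
    Finset.sum_congr rfl fun x hx => by rw [extendPR_of_ne ψ (Finset.ne_of_mem_erase hx)]]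
  simp [extendPR_self, h]

theorem costPR_finalPR_le_cwc [DecidableEq ι] [Finite O] (c : ι → ℝ) {U : Set (ι → O)}
    (π : (ι → Option O) → Option ι) {φ : ι → O} (hφ : φ ∈ U) :
    costPR c (finalPR π φ) ≤ cwc c U π :=
  le_csSup ((Set.toFinite U).image _).bddAbove ⟨φ, hφ, rfl⟩

theorem cwc_nonneg [DecidableEq ι] {c : ι → ℝ} (hc : ∀ e, 0 ≤ c e) (U : Set (ι → O))
    (π : (ι → Option O) → Option ι) : 0 ≤ cwc c U π :=
  Real.sSup_nonneg <| by
    rintro _ ⟨φ, -, rfl⟩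
    exact costPR_nonneg hc _

end Cost

section Runs

variable [DecidableEq ι] {π : (ι → Option O) → Option ι} {φ : ι → O}

theorem stepPolicy_of_eq_none {ψ : ι → Option O} (h : π ψ = none) :
    stepPolicy π φ ψ = ψ := by
  simp [stepPolicy, h]

theorem stepPolicy_of_eq_some {ψ : ι → Option O} {e : ι} (h : π ψ = some e) :
    stepPolicy π φ ψ = extendPR ψ e (φ e) := by
  simp [stepPolicy, h]

theorem runPolicy_eq_iterate (n : ℕ) : runPolicy π φ n = (stepPolicy π φ)^[n] emptyPR := by
  induction n with
  | zero => rfl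
  | succ n ih => rw [Function.iterate_succ_apply', ← ih, runPolicy]

theorem consistent_runPolicy (n : ℕ) : consistent φ (runPolicy π φ n) := by
  induction n with
  | zero => exact consistent_emptyPR φ
  | succ n ih =>
    rw [runPolicy, stepPolicy]
    split
    · exact ih
    · exact consistent_extendPR ih _

end Runs

section Adversary

variable [DecidableEq ι] [Finite O] {f : (ι → Option O) → ℝ} {U : Set (ι → O)} {c : ι → ℝ}
  {ψ : ι → Option O} {ρ : ℝ}

theorem exists_adversarial_answer (hsub : WCSubmodular f U) (hρ : 0 ≤ ρ) (hc : ∀ e, 0 ≤ c e)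
    (hd : ∀ e ∉ dom ψ, Dwc f U e ψ ≤ ρ * c e) {κ : ι → Option O} (hψκ : subreal ψ κ)
    (hκ : ∃ φ ∈ U, consistent φ κ) (e : ι) :
    ∃ o κ₁, subreal κ κ₁ ∧ κ₁ e = some o ∧ (∃ φ ∈ U, consistent φ κ₁) ∧
      f κ₁ - f κ ≤ ρ * c e := by
  cases hκe : κ e with
  | some o => exact ⟨o, κ, subreal_refl κ, hκe, hκ, by simpa using mul_nonneg hρ (hc e)⟩
  | none =>
    obtain ⟨o, ho, hoeq⟩ := exists_Dwc_eq (f := f) (e := e) hκ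
    have hψe : ψ e = none := by
      cases hψx : ψ e with
      | none => rfl
      | some o' => simp [hψκ e o' hψx] at hκe
    refine ⟨o, extendPR κ e o, subreal_extendPR hκe o, extendPR_self κ e o,
      consistent_extendPR_of_mem_Ostates ho, ?_⟩
    rw [hoeq]
    exact (hsub ψ κ hψκ hκ e (notMem_dom.mpr hκe)).trans (hd e (notMem_dom.mpr hψe))

/-- `κ'` records every state the adversary has committed to, and `φ` realizes all of them. -/
theorem exists_adversarial_run [Fintype ι] (hsub : WCSubmodular f U)
    {π : (ι → Option O) → Option ι} (hπ : ValidPolicy π) (hρ : 0 ≤ ρ) (hc : ∀ e, 0 ≤ c e)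
    (hd : ∀ e ∉ dom ψ, Dwc f U e ψ ≤ ρ * c e) (n : ℕ) :
    ∀ θ κ, subreal θ κ → subreal ψ κ → (∃ φ ∈ U, consistent φ κ) →
      ∃ φ ∈ U, ∃ κ', consistent φ κ' ∧ subreal κ κ' ∧
        subreal ((stepPolicy π φ)^[n] θ) κ' ∧
        f κ' - f κ ≤ ρ * (costPR c ((stepPolicy π φ)^[n] θ) - costPR c θ) := by
  induction n with
  | zero =>
    rintro θ κ hθκ - ⟨φ, hφ, hκ⟩
    exact ⟨φ, hφ, κ, hκ, subreal_refl κ, hθκ, by simp⟩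
  | succ n ih =>
    intro θ κ hθκ hψκ hκ
    cases hπθ : π θ with
    | none =>
      obtain ⟨φ, hφ, κ', h⟩ := ih θ κ hθκ hψκ hκ
      exact ⟨φ, hφ, κ', by rwa [Function.iterate_succ_apply, stepPolicy_of_eq_none hπθ]⟩
    | some e =>
      obtain ⟨o, κ₁, hκκ₁, hκ₁e, hκ₁, hgain⟩ :=
        exists_adversarial_answer hsub hρ hc hd hψκ hκ e
      obtain ⟨φ, hφ, κ', hφκ', hκ₁κ', hrun, hloss⟩ :=
        ih (extendPR θ e o) κ₁ (extendPR_subreal (subreal_trans hθκ hκκ₁) hκ₁e)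
          (subreal_trans hψκ hκκ₁) hκ₁
      have hstep : stepPolicy π φ θ = extendPR θ e o := by
        rw [stepPolicy_of_eq_some hπθ, hφκ' e o (hκ₁κ' e o hκ₁e)]
      rw [costPR_extendPR c (hπ θ e hπθ)] at hloss
      refine ⟨φ, hφ, κ', hφκ', subreal_trans hκκ₁ hκ₁κ', ?_, ?_⟩ <;>
        rw [Function.iterate_succ_apply, hstep]
      · exact hrun
      · linarith

theorem sub_le_mul_cwc_of_Dwc_le [Fintype ι] (hmono : WCMonotone f U) (hsub : WCSubmodular f U)
    {π : (ι → Option O) → Option ι} (hπ : ValidPolicy π) {Q : ℝ} (hcov : Covers f U π Q)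
    (hρ : 0 ≤ ρ) (hc : ∀ e, 0 ≤ c e) (hψ : ∃ φ ∈ U, consistent φ ψ)
    (hd : ∀ e ∉ dom ψ, Dwc f U e ψ ≤ ρ * c e) :
    Q - f ψ ≤ ρ * cwc c U π := by
  obtain ⟨φ, hφ, κ, hφκ, -, hrun, hloss⟩ := exists_adversarial_run hsub hπ hρ hc hd
    (Fintype.card ι) emptyPR ψ (fun _ _ h => nomatch h) (subreal_refl ψ) hψ
  rw [← runPolicy_eq_iterate] at hrun hloss
  rw [costPR_emptyPR, sub_zero] at hloss
  have hκQ : Q ≤ f κ := (hcov φ hφ).trans (hmono.le_of_subreal hφ hrun hφκ)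
  have hcost := mul_le_mul_of_nonneg_left (costPR_finalPR_le_cwc c π hφ) hρ
  rw [finalPR] at hcost
  linarith

end Adversary

theorem le_mul_log_sub_log {a b c B : ℝ} (ha : 0 < a) (hb : 0 < b) (hB : 0 ≤ B)
    (h : a * c ≤ B * (a - b)) : c ≤ B * (Real.log a - Real.log b) := by
  have hlog : (a - b) / a ≤ Real.log a - Real.log b := by
    have := Real.one_sub_inv_le_log_of_pos (div_pos ha hb)
    rwa [inv_div, Real.log_div ha.ne' hb.ne', one_sub_div ha.ne'] at this
  calc c ≤ B * ((a - b) / a) := by rw [← mul_div_assoc, le_div_iff₀ ha]; linarith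
    _ ≤ B * (Real.log a - Real.log b) := mul_le_mul_of_nonneg_left hlog hB

theorem log_potential_step {Q η B x y k k' : ℝ} (hB : 0 ≤ B) (hη0 : 0 < η) (hx : x < Q)
    (hxη : η ≤ Q - x) (hyQ : y ≤ Q) (hyη : y < Q → η ≤ Q - y)
    (hk : k ≤ B * (Real.log Q - Real.log (Q - x))) (hprogress : (Q - x) * (k' - k) ≤ B * (y - x)) :
    (y < Q → k' ≤ B * (Real.log Q - Real.log (Q - y))) ∧
      k' ≤ B * (Real.log Q - Real.log η + 1) := by
  have hcap : ∀ z, η ≤ Q - z →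
      B * (Real.log Q - Real.log (Q - z)) ≤ B * (Real.log Q - Real.log η) :=
    fun z hz => mul_le_mul_of_nonneg_left (sub_le_sub_left (Real.log_le_log hη0 hz) _) hB
  have hlog : y < Q → k' ≤ B * (Real.log Q - Real.log (Q - y)) := fun hy => by
    have := le_mul_log_sub_log (sub_pos.mpr hx) (sub_pos.mpr hy) hB
      (by rw [sub_sub_sub_cancel_left]; exact hprogress)
    linarith
  refine ⟨hlog, ?_⟩
  by_cases hy : y < Q
  · linarith [hlog hy, hcap y (hyη hy)]
  · -- the step reaching `Q` costs at most `B`, since it gains at most `Q - x`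
    have hstep : k' - k ≤ B := le_of_mul_le_mul_left (by nlinarith) (sub_pos.mpr hx)
    linarith [hcap x hxη]

theorem le_sub_of_lt_of_gap {f : (ι → Option O) → ℝ} {U : Set (ι → O)} {Q η : ℝ}
    (hgap : ∀ ψ : ι → Option O, (∃ φ ∈ U, consistent φ ψ) → Q - η < f ψ → f ψ = Q)
    {ψ : ι → Option O} (hψ : ∃ φ ∈ U, consistent φ ψ) (h : f ψ < Q) : η ≤ Q - f ψ := by
  by_contra! hlt
  exact h.ne (hgap ψ hψ (by linarith))

section Greedy

variable [DecidableEq ι] [Fintype ι] [Finite O] {f : (ι → Option O) → ℝ} {U : Set (ι → O)}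
  {c : ι → ℝ} {Q : ℝ} {π : (ι → Option O) → Option ι}

theorem CoverGreedy.sub_mul_le_cwc_mul_Dwc (hg : CoverGreedy f U c Q π) (hmono : WCMonotone f U)
    (hsub : WCSubmodular f U) (hc : ∀ e, 0 < c e) {πs : (ι → Option O) → Option ι}
    (hπs : ValidPolicy πs) (hcov : Covers f U πs Q) :
    ∀ ψ, Reachable π U ψ → ∀ e, π ψ = some e → (Q - f ψ) * c e ≤ cwc c U πs * Dwc f U e ψ := by
  intro ψ hreach e hπe
  have hfψ : f ψ < Q := not_le.mp fun h => by simp [hg.2.1 ψ h] at hπe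
  obtain ⟨e', he', hπe', hmax⟩ := hg.2.2 ψ hreach hfψ
  obtain rfl : e = e' := Option.some.inj (hπe.symm.trans hπe')
  have hψ : ∃ φ ∈ U, consistent φ ψ := by
    obtain ⟨φ, hφ, n, rfl⟩ := hreach
    exact ⟨φ, hφ, consistent_runPolicy n⟩
  have hdens := sub_le_mul_cwc_of_Dwc_le hmono hsub hπs hcov
    (div_nonneg (hmono ψ hψ e he') (hc e).le) (fun e => (hc e).le) hψ
    fun x hx => (div_le_iff₀ (hc x)).mp (hmax x hx)
  calc (Q - f ψ) * c e ≤ Dwc f U e ψ / c e * cwc c U πs * c e :=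
        mul_le_mul_of_nonneg_right hdens (hc e).le
    _ = cwc c U πs * Dwc f U e ψ := by field_simp [(hc e).ne']

theorem costPR_runPolicy_le (hmono : WCMonotone f U) (hfull : ∀ φ ∈ U, f (toPR φ) = Q)
    (hempty : f emptyPR = 0) {η : ℝ} (hη0 : 0 < η) (hηQ : η ≤ Q)
    (hgap : ∀ ψ : ι → Option O, (∃ φ ∈ U, consistent φ ψ) → Q - η < f ψ → f ψ = Q)
    (hπ : ValidPolicy π) {B : ℝ} (hB : 0 ≤ B) (hstop : ∀ ψ, Q ≤ f ψ → π ψ = none)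
    (hgain : ∀ ψ, Reachable π U ψ → ∀ e, π ψ = some e → (Q - f ψ) * c e ≤ B * Dwc f U e ψ)
    {φ : ι → O} (hφ : φ ∈ U) (n : ℕ) :
    (f (runPolicy π φ n) < Q →
      costPR c (runPolicy π φ n) ≤ B * (Real.log Q - Real.log (Q - f (runPolicy π φ n)))) ∧
    costPR c (runPolicy π φ n) ≤ B * (Real.log Q - Real.log η + 1) := by
  have hgap_n : ∀ n, f (runPolicy π φ n) < Q → η ≤ Q - f (runPolicy π φ n) :=
    fun n => le_sub_of_lt_of_gap hgap ⟨φ, hφ, consistent_runPolicy n⟩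
  induction n with
  | zero =>
    simp only [runPolicy, costPR_emptyPR, hempty, sub_zero, sub_self, mul_zero, le_refl,
      implies_true, true_and]
    exact mul_nonneg hB (by linarith [Real.log_le_log hη0 hηQ])
  | succ n ih =>
    cases hπn : π (runPolicy π φ n) with
    | none => rwa [runPolicy, stepPolicy_of_eq_none hπn]
    | some e =>
      have hfn : f (runPolicy π φ n) < Q := not_le.mp fun h => by simp [hstop _ h] at hπn
      have hnext : runPolicy π φ (n + 1) = extendPR (runPolicy π φ n) e (φ e) := by
        rw [runPolicy, stepPolicy_of_eq_some hπn]
      have hprogress : (Q - f (runPolicy π φ n)) *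
          (costPR c (runPolicy π φ (n + 1)) - costPR c (runPolicy π φ n)) ≤
          B * (f (runPolicy π φ (n + 1)) - f (runPolicy π φ n)) := by
        rw [hnext, costPR_extendPR c (hπ _ e hπn), add_sub_cancel_left]
        exact (hgain _ ⟨φ, hφ, n, rfl⟩ e hπn).trans (mul_le_mul_of_nonneg_left
          (Dwc_le (mem_Ostates hφ (consistent_runPolicy n) e)) hB)
      have hle_Q : f (runPolicy π φ (n + 1)) ≤ Q := hfull φ hφ ▸
        hmono.le_of_subreal hφ (subreal_toPR (consistent_runPolicy _)) (consistent_toPR φ)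
      exact log_potential_step hB hη0 hfn (hgap_n n hfn) hle_Q (hgap_n (n + 1)) (ih.1 hfn)
        hprogress

end Greedy

theorem stmt_9_general {ι O : Type*} [Fintype ι] [DecidableEq ι] [Fintype O]
    (U : Set (ι → O))
    (c : ι → ℕ) (hc : ∀ e, 0 < c e)
    (f : (ι → Option O) → ℝ)
    (hmono : WCMonotone f U) (hsub : WCSubmodular f U)
    (Q : ℝ) (hempty : f emptyPR = 0)
    (hfull : ∀ φ ∈ U, f (toPR φ) = Q)
    (η : ℝ) (hη0 : 0 < η) (hηQ : η ≤ Q)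
    (hgap : ∀ ψ : ι → Option O, (∃ φ ∈ U, consistent φ ψ) → Q - η < f ψ → f ψ = Q)
    (πg : (ι → Option O) → Option ι)
    (hg : CoverGreedy f U (fun e => (c e : ℝ)) Q πg)
    (πs : (ι → Option O) → Option ι) (hπs : ValidPolicy πs)
    (hcov : Covers f U πs Q) :
    cwc (fun e => (c e : ℝ)) U πg ≤
      (Real.log (Q / η) + 1) * cwc (fun e => (c e : ℝ)) U πs := by
  have hB : 0 ≤ cwc (fun e => (c e : ℝ)) U πs := cwc_nonneg (fun e => Nat.cast_nonneg _) U πs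
  have hgain := hg.sub_mul_le_cwc_mul_Dwc hmono hsub (fun e => Nat.cast_pos.mpr (hc e)) hπs hcov
  rw [Real.log_div (hη0.trans_le hηQ).ne' hη0.ne']
  refine Real.sSup_le ?_ (mul_nonneg ?_ hB)
  · rintro _ ⟨φ, hφ, rfl⟩
    exact (costPR_runPolicy_le hmono hfull hempty hη0 hηQ hgap hg.1 hB hg.2.1 hgain hφ
      (Fintype.card ι)).2.trans_eq (mul_comm _ _)
  · linarith [Real.log_le_log hη0 hηQ]

/-- **Theorem 2 (main cover result).** Suppose `f` is worst-case monotone and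
worst-case submodular, `f ∅ = 0` and `f φ = Q > 0` for every `φ ∈ U`. Let
`0 < η ≤ Q` be such that `f ψ > Q − η` implies `f ψ = Q` for every partial
realization `ψ` consistent with some realization in `U`. Then the worst-case
density-greedy policy `π^g` satisfies
`c_wc(π^g) ≤ (ln (Q/η) + 1) · c_wc(π*)` for every adaptive policy `π*`
covering `Q`. -/
theorem stmt_9 {ι O : Type*} [Fintype ι] [Nonempty ι] [DecidableEq ι] [Fintype O]
    (U : Set (ι → O)) (hU : U.Nonempty)
    (c : ι → ℕ) (hc : ∀ e, 0 < c e)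
    (f : (ι → Option O) → ℝ) (hf0 : ∀ ψ, 0 ≤ f ψ)
    (hmono : WCMonotone f U) (hsub : WCSubmodular f U)
    (Q : ℝ) (hQ : 0 < Q) (hempty : f emptyPR = 0)
    (hfull : ∀ φ ∈ U, f (toPR φ) = Q)
    (η : ℝ) (hη0 : 0 < η) (hηQ : η ≤ Q)
    (hgap : ∀ ψ : ι → Option O, (∃ φ ∈ U, consistent φ ψ) → Q - η < f ψ → f ψ = Q)
    (πg : (ι → Option O) → Option ι)
    (hg : CoverGreedy f U (fun e => (c e : ℝ)) Q πg)
    (πs : (ι → Option O) → Option ι) (hπs : ValidPolicy πs)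
    (hcov : Covers f U πs Q) :
    cwc (fun e => (c e : ℝ)) U πg ≤
      (Real.log (Q / η) + 1) * cwc (fun e => (c e : ℝ)) U πs :=
  stmt_9_general U c hc f hmono hsub Q hempty hfull η hη0 hηQ hgap πg hg πs hπs hcov

end WCAS
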